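/- (Painlevé VI similarity ansatz for the H1 reduced system.) Fix integers n, m and μ ∈ ℝ. Let I ⊆ (0,∞) be an open interval, let S, S1, S2 be twice differentiable real functions on I, and set D := {(α,β) ∈ ℝ² : α > 0, β > 0, α ≠ β, α/β ∈ I}. Define u(α,β) := S(α/β)·(αβ)^μ, u1(α,β) := S1(α/β)·(αβ)^{1/2−μ}, u2(α,β) := S2(α/β)·(αβ)^{1/2−μ}. Then (u, u1, u2) satisfies the H1 reduced system Σ_H1(n,m) on D if and only if (S, S1, S2) satisfies the reduced ODE system (sysH1redPVI) on I ∖ {1}. -/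

import Mathlib

/-- Partial derivative with respect to the first variable. -/
noncomputable def pda (f : ℝ × ℝ → ℝ) (p : ℝ × ℝ) : ℝ :=
  deriv (fun x => f (x, p.2)) p.1

/-- Partial derivative with respect to the second variable. -/
noncomputable def pdb (f : ℝ × ℝ → ℝ) (p : ℝ × ℝ) : ℝ :=
  deriv (fun y => f (p.1, y)) p.2

/-- The H1 reduced system Σ_H1(n,m). -/
def SigmaH1 (n m : ℤ) (u u1 u2 : ℝ × ℝ → ℝ) (p : ℝ × ℝ) : Prop :=
  pdb u1 p = ((u1 p - u2 p) / (p.1 - p.2)) * ((m : ℝ) - (u1 p - u2 p) * pdb u p) ∧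
  pda u2 p = ((u1 p - u2 p) / (p.1 - p.2)) * ((n : ℝ) + (u1 p - u2 p) * pda u p) ∧
  pdb (pda u) p = (1 / (p.1 - p.2)) *
    (2 * (u1 p - u2 p) * pda u p * pdb u p + (n : ℝ) * pdb u p - (m : ℝ) * pda u p)

/-- The reduced ODE system (sysH1redPVI). -/
def sysH1redPVI (n m : ℤ) (μ : ℝ) (S S1 S2 : ℝ → ℝ) (y : ℝ) : Prop :=
  (1 - y) * (2 * y * deriv S1 y + (2 * μ - 1) * S1 y) =
      2 * ((m : ℝ) + Real.sqrt y * (y * deriv S y - μ * S y) * (S1 y - S2 y))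
        * (S1 y - S2 y) ∧
  (y - 1) * (2 * y * deriv S2 y - (2 * μ - 1) * S2 y) =
      2 * ((n : ℝ) * y + Real.sqrt y * (y * deriv S y + μ * S y) * (S1 y - S2 y))
        * (S1 y - S2 y) ∧
  (y - 1) * (y ^ 2 * deriv (deriv S) y + y * deriv S y - μ ^ 2 * S y) =
      2 * Real.sqrt y * (y * deriv S y + μ * S y) * (y * deriv S y - μ * S y)
        * (S1 y - S2 y)
        + (m : ℝ) * (y * deriv S y + μ * S y) + (n : ℝ) * y * (y * deriv S y - μ * S y)

/-!
Write `y = α / β`. Applied to `f (α / β) * (α * β) ^ c`, the Euler operators `α ∂_α` and `β ∂_β`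
return functions of the same shape, with `f` replaced by `y f' + c f` and `-(y f' - c f)`.
Hence each equation of `Σ_H1(n,m)` at `(α, β)` is a nonzero multiple of the corresponding
equation of `sysH1redPVI` at `y`; the factor `√y` enters through
`(α β) ^ (1/2 - μ) (α β) ^ μ = √(α / β) β`. Every `y ∈ I \ {1}` is reached from `(α, β) = (y, 1)`.
-/

open Filter Topology

noncomputable def similarityAnsatz (f : ℝ → ℝ) (c : ℝ) (q : ℝ × ℝ) : ℝ :=
  f (q.1 / q.2) * (q.1 * q.2) ^ c

section SimilarityAnsatz

variable {f : ℝ → ℝ} {f' c x t : ℝ}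

theorem hasDerivAt_similarityAnsatz_fst (hx : 0 < x) (ht : 0 < t) (hf : HasDerivAt f f' (x / t)) :
    HasDerivAt (fun z => similarityAnsatz f c (z, t))
      ((x / t * f' + c * f (x / t)) * (x * t) ^ c / x) x := by
  have hquot := hf.comp x ((hasDerivAt_id' x).div_const t)
  have hpow := ((hasDerivAt_id' x).mul_const t).rpow_const (p := c) (Or.inl (mul_pos hx ht).ne')
  refine (hquot.mul hpow).congr_deriv ?_
  rw [Function.comp_apply, Real.rpow_sub (mul_pos hx ht), Real.rpow_one]
  field_simp

theorem hasDerivAt_similarityAnsatz_snd (hx : 0 < x) (ht : 0 < t) (hf : HasDerivAt f f' (x / t)) :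
    HasDerivAt (fun z => similarityAnsatz f c (x, z))
      (-(x / t * f' - c * f (x / t)) * (x * t) ^ c / t) t := by
  have hquot := hf.comp t ((hasDerivAt_const t x).fun_div (hasDerivAt_id' t) ht.ne')
  have hpow := ((hasDerivAt_id' t).const_mul x).rpow_const (p := c) (Or.inl (mul_pos hx ht).ne')
  refine (hquot.mul hpow).congr_deriv ?_
  rw [Function.comp_apply, Real.rpow_sub (mul_pos hx ht), Real.rpow_one]
  field_simp
  ring

theorem pda_similarityAnsatz (hx : 0 < x) (ht : 0 < t) (hf : DifferentiableAt ℝ f (x / t)) :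
    pda (similarityAnsatz f c) (x, t) =
      (x / t * deriv f (x / t) + c * f (x / t)) * (x * t) ^ c / x :=
  (hasDerivAt_similarityAnsatz_fst hx ht hf.hasDerivAt).deriv

theorem pdb_similarityAnsatz (hx : 0 < x) (ht : 0 < t) (hf : DifferentiableAt ℝ f (x / t)) :
    pdb (similarityAnsatz f c) (x, t) =
      -(x / t * deriv f (x / t) - c * f (x / t)) * (x * t) ^ c / t :=
  (hasDerivAt_similarityAnsatz_snd hx ht hf.hasDerivAt).deriv

theorem pdb_pda_similarityAnsatz (hx : 0 < x) (ht : 0 < t)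
    (hf : ∀ᶠ z in 𝓝 (x / t), DifferentiableAt ℝ f z)
    (hf' : DifferentiableAt ℝ (deriv f) (x / t)) :
    pdb (pda (similarityAnsatz f c)) (x, t) = -((x / t) ^ 2 * deriv (deriv f) (x / t)
      + x / t * deriv f (x / t) - c ^ 2 * f (x / t)) * (x * t) ^ c / (x * t) := by
  set g : ℝ → ℝ := fun y => y * deriv f y + c * f y
  have hg : HasDerivAt g (deriv f (x / t) + x / t * deriv (deriv f) (x / t)
      + c * deriv f (x / t)) (x / t) :=
    (((hasDerivAt_id' _).mul hf'.hasDerivAt).add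
      (hf.self_of_nhds.hasDerivAt.const_mul c)).congr_deriv (by ring)
  have hpda : (fun z => pda (similarityAnsatz f c) (x, z)) =ᶠ[𝓝 t]
      fun z => similarityAnsatz g c (x, z) / x := by
    have hquot : ContinuousAt (fun z => x / z) t := continuousAt_const.div continuousAt_id ht.ne'
    filter_upwards [eventually_gt_nhds ht, hquot.eventually hf] with z hz hfz
    rw [pda_similarityAnsatz hx hz hfz, similarityAnsatz]
  refine (((hasDerivAt_similarityAnsatz_snd hx ht hg).div_const x).congr_of_eventuallyEq
    hpda).deriv.trans ?_
  simp only [g]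
  field_simp
  ring

end SimilarityAnsatz

theorem eq_iff_eq_of_sub_eq_mul {R : Type*} [Ring R] [NoZeroDivisors R] {a b c d k : R} (hk : k ≠ 0) (h : a - b = k * (c - d)) :
    a = b ↔ c = d := by
  rw [← sub_eq_zero, h, mul_eq_zero, sub_eq_zero, or_iff_right hk]

theorem sigmaH1_similarityAnsatz_iff {n m : ℤ} {μ a b : ℝ} {S S1 S2 : ℝ → ℝ}
    (ha : 0 < a) (hb : 0 < b) (hab : a ≠ b)
    (hS : ∀ᶠ z in 𝓝 (a / b), DifferentiableAt ℝ S z) (hS' : DifferentiableAt ℝ (deriv S) (a / b))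
    (hS1 : DifferentiableAt ℝ S1 (a / b)) (hS2 : DifferentiableAt ℝ S2 (a / b)) :
    SigmaH1 n m (similarityAnsatz S μ) (similarityAnsatz S1 (1 / 2 - μ))
        (similarityAnsatz S2 (1 / 2 - μ)) (a, b) ↔
      sysH1redPVI n m μ S S1 S2 (a / b) := by
  have hy : 0 < a / b := div_pos ha hb
  have hP : 0 < (a * b) ^ μ := Real.rpow_pos_of_pos (mul_pos ha hb) μ
  have hK : (a * b) ^ (1 / 2 - μ) = √(a / b) * b / (a * b) ^ μ := by
    rw [eq_div_iff hP.ne', ← Real.rpow_add (mul_pos ha hb), sub_add_cancel, ← Real.sqrt_eq_rpow,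
      show a * b = a / b * b ^ 2 by field_simp, Real.sqrt_mul hy.le, Real.sqrt_sq hb.le]
  have hr : 0 < √(a / b) := Real.sqrt_pos.mpr hy
  simp only [SigmaH1, sysH1redPVI]
  rw [pdb_similarityAnsatz ha hb hS1, pda_similarityAnsatz ha hb hS2,
    pdb_similarityAnsatz ha hb hS.self_of_nhds, pda_similarityAnsatz ha hb hS.self_of_nhds,
    pdb_pda_similarityAnsatz ha hb hS hS']
  simp only [similarityAnsatz]
  rw [hK]
  generalize (a * b) ^ μ = P at hP ⊢
  generalize √(a / b) = r at hr ⊢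
  have ha_eq : a = a / b * b := by field_simp
  generalize a / b = y at ha_eq hy ⊢
  subst ha_eq
  have hy1 : y - 1 ≠ 0 := fun h => hab (by linear_combination b * h)
  refine and_congr ?_ (and_congr ?_ ?_)
  · refine eq_iff_eq_of_sub_eq_mul (k := r / (2 * P * (y - 1))) (by positivity) ?_
    field_simp
    ring
  · refine eq_iff_eq_of_sub_eq_mul (k := r / (2 * P * y * (y - 1))) (by positivity) ?_
    field_simp
    ring
  · refine eq_iff_eq_of_sub_eq_mul (k := -P / (y * b ^ 2 * (y - 1)))
      (div_ne_zero (neg_ne_zero.mpr hP.ne') (by positivity)) ?_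
    field_simp
    ring

theorem similarity_ansatz_PVI_H1_general
    (n m : ℤ) (μ : ℝ) (I : Set ℝ) (hI : IsOpen I)
    (hIpos : I ⊆ Set.Ioi (0 : ℝ)) (S S1 S2 : ℝ → ℝ)
    (hS : ContDiffOn ℝ 2 S I) (hS1 : ContDiffOn ℝ 2 S1 I) (hS2 : ContDiffOn ℝ 2 S2 I) :
    (∀ p : ℝ × ℝ, 0 < p.1 → 0 < p.2 → p.1 ≠ p.2 → p.1 / p.2 ∈ I →
      SigmaH1 n m
        (fun q => S (q.1 / q.2) * (q.1 * q.2) ^ μ)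
        (fun q => S1 (q.1 / q.2) * (q.1 * q.2) ^ (1 / 2 - μ))
        (fun q => S2 (q.1 / q.2) * (q.1 * q.2) ^ (1 / 2 - μ)) p) ↔
    (∀ y ∈ I \ {1}, sysH1redPVI n m μ S S1 S2 y) := by
  have hdiff {f : ℝ → ℝ} {k : WithTop ℕ∞} (hf : ContDiffOn ℝ k f I) (hk : k ≠ 0) {y : ℝ}
      (hy : y ∈ I) : DifferentiableAt ℝ f y :=
    (hf.contDiffAt (hI.mem_nhds hy)).differentiableAt hk
  have hS' {y : ℝ} (hy : y ∈ I) : DifferentiableAt ℝ (deriv S) y :=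
    hdiff (hS.deriv_of_isOpen hI (m := 1) (by norm_num)) one_ne_zero hy
  have key {a b : ℝ} (ha : 0 < a) (hb : 0 < b) (hab : a ≠ b) (hy : a / b ∈ I) :=
    sigmaH1_similarityAnsatz_iff (n := n) (m := m) (μ := μ) ha hb hab
      (eventually_of_mem (hI.mem_nhds hy) fun _ => hdiff hS two_ne_zero) (hS' hy)
      (hdiff hS1 two_ne_zero hy) (hdiff hS2 two_ne_zero hy)
  constructor
  · rintro h y ⟨hyI, hy1 : y ≠ 1⟩
    have hy0 : 0 < y := hIpos hyI
    rw [← div_one y] at hyI ⊢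
    exact (key hy0 one_pos hy1 hyI).mp (h (y, 1) hy0 one_pos hy1 hyI)
  · rintro h ⟨a, b⟩ ha hb hab hy
    exact (key ha hb hab hy).mpr (h _ ⟨hy, fun h1 => hab ((div_eq_one_iff_eq hb.ne').mp h1)⟩)

/-- Painlevé VI similarity ansatz for the H1 reduced system. -/
theorem similarity_ansatz_PVI_H1
    (n m : ℤ) (μ : ℝ) (I : Set ℝ) (hI : IsOpen I) (hIc : I.OrdConnected)
    (hIpos : I ⊆ Set.Ioi (0 : ℝ)) (S S1 S2 : ℝ → ℝ)
    (hS : ContDiffOn ℝ 2 S I) (hS1 : ContDiffOn ℝ 2 S1 I) (hS2 : ContDiffOn ℝ 2 S2 I) :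
    (∀ p : ℝ × ℝ, 0 < p.1 → 0 < p.2 → p.1 ≠ p.2 → p.1 / p.2 ∈ I →
      SigmaH1 n m
        (fun q => S (q.1 / q.2) * (q.1 * q.2) ^ μ)
        (fun q => S1 (q.1 / q.2) * (q.1 * q.2) ^ (1 / 2 - μ))
        (fun q => S2 (q.1 / q.2) * (q.1 * q.2) ^ (1 / 2 - μ)) p) ↔
    (∀ y ∈ I \ {1}, sysH1redPVI n m μ S S1 S2 y) :=
  similarity_ansatz_PVI_H1_general n m μ I hI hIpos S S1 S2 hS hS1 hS2
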